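/- If T is a tree on n vertices with maximum degree Δ(T), then γ_g(T) ≥ ⌈2n/(Δ(T)+3)⌉ − 1. -/

import Mathlib

open Finset

namespace DomGame

variable {V : Type*} [Fintype V] [DecidableEq V]

/-- Closed neighborhood of `v` in `G`, as a `Finset`. -/
noncomputable def cn (G : SimpleGraph V) (v : V) : Finset V :=
  haveI : DecidablePred (fun u : V => u = v ∨ G.Adj v u) := fun _ => Classical.propDecidable _
  Finset.univ.filter (fun u : V => u = v ∨ G.Adj v u)

/-- Value (number of remaining moves, optimal play) of the domination game on `G`,
with fuel, where `D` is the set of already dominated vertices and `who = true`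
means Dominator is to move (minimizing); `who = false` means Staller (maximizing). -/
noncomputable def auxVal (G : SimpleGraph V) : ℕ → Bool → Finset V → ℕ
  | 0, _, _ => 0
  | n + 1, who, D =>
    if D = Finset.univ then 0
    else
      haveI : DecidablePred (fun v : V => ¬ cn G v ⊆ D) := fun _ => Classical.propDecidable _
      let moves : Finset V := Finset.univ.filter (fun v : V => ¬ cn G v ⊆ D)
      if who then
        WithTop.untopD 0 ((moves.image (fun v => 1 + auxVal G n false (D ∪ cn G v))).min)
      else
        moves.sup (fun v => 1 + auxVal G n true (D ∪ cn G v))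

/-- Remaining moves of the domination game on the partially dominated graph `(G, D)`,
Dominator to move, both players optimal. -/
noncomputable def gVal (G : SimpleGraph V) (D : Finset V) : ℕ :=
  auxVal G (Fintype.card V) true D

/-- Remaining moves, Staller to move. -/
noncomputable def gVal' (G : SimpleGraph V) (D : Finset V) : ℕ :=
  auxVal G (Fintype.card V) false D

/-- The game domination number (Dominator starts). -/
noncomputable def gammaG (G : SimpleGraph V) : ℕ := gVal G ∅

/-- The Staller-start game domination number. -/
noncomputable def gammaG' (G : SimpleGraph V) : ℕ := gVal' G ∅

/-- `S` is a dominating set of `G`. -/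
def IsDomSet (G : SimpleGraph V) (S : Finset V) : Prop :=
  ∀ v : V, ∃ u ∈ S, u = v ∨ G.Adj u v

/-- The domination number of `G`. -/
noncomputable def gamma (G : SimpleGraph V) : ℕ :=
  sInf {n | ∃ S : Finset V, IsDomSet G S ∧ S.card = n}

end DomGame

/-!
Staller plays the undominated vertex farthest from a fixed root: in a tree its only undominated
neighbour can be its parent, so her move dominates at most two new vertices, while a Dominator
move dominates at most `Δ + 1`. Hence every round dominates at most `Δ + 3` new vertices, and by
induction on the game `2 · #dominated + (Δ + 3) · (moves left)` is at least `2n` with Staller to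
move and at least `2n + 1 - Δ` with Dominator to move; at the start this gives
`2n ≤ (Δ + 3)(γ_g + 1)`.
-/

open Finset

theorem SimpleGraph.IsTree.eq_of_adj_of_dist_lt {V : Type*} {T : SimpleGraph V} (hT : T.IsTree)
    (r : V) {v a b : V} (ha : T.Adj v a) (hb : T.Adj v b) (har : T.dist r a < T.dist r v)
    (hbr : T.dist r b < T.dist r v) : a = b := by
  obtain ⟨p, hp⟩ := hT.connected.exists_walk_length_eq_dist r v
  have eq_penultimate : ∀ c, T.Adj v c → T.dist r c < T.dist r v → c = p.penultimate := by
    intro c hc hcr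
    obtain ⟨q, hq⟩ := hT.connected.exists_walk_length_eq_dist r c
    have hqv : (q.concat hc.symm).length = T.dist r v := by
      have := hT.dist_eq_dist_add_one_of_adj r hc
      rw [Walk.length_concat, hq]
      omega
    have hpath : p = q.concat hc.symm := congrArg Subtype.val <|
      (hT.isAcyclic.subsingleton_path r v).elim ⟨p, p.isPath_of_length_eq_dist hp⟩
        ⟨_, (q.concat hc.symm).isPath_of_length_eq_dist hqv⟩
    rw [hpath, Walk.penultimate_concat]
  rw [eq_penultimate a ha har, eq_penultimate b hb hbr]

namespace DomGame

variable {V : Type*} [Fintype V]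

lemma mem_cn {G : SimpleGraph V} {u v : V} : u ∈ cn G v ↔ u = v ∨ G.Adj v u := by
  simp [cn]

lemma self_mem_cn (G : SimpleGraph V) (v : V) : v ∈ cn G v :=
  mem_cn.2 (Or.inl rfl)

lemma ne_univ_of_not_cn_subset {G : SimpleGraph V} {D : Finset V} {v : V} (hv : ¬ cn G v ⊆ D) :
    D ≠ univ := by
  rintro rfl
  exact hv (subset_univ _)

variable [DecidableEq V]

lemma card_cn_le (G : SimpleGraph V) [DecidableRel G.Adj] (v : V) :
    #(cn G v) ≤ G.maxDegree + 1 := by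
  have hsub : cn G v ⊆ insert v (G.neighborFinset v) := fun u hu => by
    rcases mem_cn.1 hu with rfl | h
    · exact mem_insert_self u _
    · exact mem_insert_of_mem ((G.mem_neighborFinset v u).2 h)
  calc #(cn G v) ≤ #(insert v (G.neighborFinset v)) := card_le_card hsub
    _ ≤ G.degree v + 1 := card_insert_le _ _
    _ ≤ G.maxDegree + 1 := by gcongr; exact G.degree_le_maxDegree v

lemma card_lt_card_union_cn {G : SimpleGraph V} {D : Finset V} {v : V} (hv : ¬ cn G v ⊆ D) :
    #D < #(D ∪ cn G v) := by
  obtain ⟨w, hw, hwD⟩ := not_subset.1 hv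
  exact card_lt_card <|
    ssubset_iff.2 ⟨w, hwD, insert_subset (mem_union_right _ hw) subset_union_left⟩

lemma card_union_cn (G : SimpleGraph V) (D : Finset V) (v : V) :
    #(D ∪ cn G v) = #D + #(cn G v \ D) := by
  rw [union_comm, ← card_sdiff_add_card, add_comm]

lemma exists_card_cn_sdiff_le_two_of_isTree {T : SimpleGraph V} (hT : T.IsTree) {D : Finset V}
    (hD : D ≠ univ) : ∃ v ∉ D, #(cn T v \ D) ≤ 2 := by
  obtain ⟨r⟩ := hT.connected.nonempty
  obtain ⟨v, hvD, hvmax⟩ := exists_max_image Dᶜ (T.dist r)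
    (by rwa [← compl_ne_univ_iff_nonempty, compl_compl])
  rw [mem_compl] at hvD
  refine ⟨v, hvD, ?_⟩
  have hparent : #((cn T v \ D).erase v) ≤ 1 := by
    refine card_le_one.2 fun a ha b hb => ?_
    have closer : ∀ c ∈ (cn T v \ D).erase v, T.Adj v c ∧ T.dist r c < T.dist r v := by
      intro c hc
      obtain ⟨hcv, hc⟩ := mem_erase.1 hc
      have hadj := (mem_cn.1 (mem_sdiff.1 hc).1).resolve_left hcv
      exact ⟨hadj, (hvmax c (mem_compl.2 (mem_sdiff.1 hc).2)).lt_of_ne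
        (hT.dist_ne_of_adj r hadj).symm⟩
    exact hT.eq_of_adj_of_dist_lt r (closer a ha).1 (closer b hb).1 (closer a ha).2 (closer b hb).2
  have := card_erase_add_one (mem_sdiff.2 ⟨self_mem_cn T v, hvD⟩)
  omega

lemma exists_auxVal_succ_true_eq (G : SimpleGraph V) (m : ℕ) {D : Finset V} (hD : D ≠ univ) :
    ∃ v, ¬ cn G v ⊆ D ∧ auxVal G (m + 1) true D = 1 + auxVal G m false (D ∪ cn G v) := by
  obtain ⟨x, hx⟩ : ∃ x, x ∉ D := by simpa [eq_univ_iff_forall] using hD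
  rw [auxVal, if_neg hD]
  dsimp only
  rw [if_pos rfl, filter_congr_decidable]
  have hne : (image (fun v => 1 + auxVal G m false (D ∪ cn G v)) {v | ¬cn G v ⊆ D}).Nonempty :=
    ⟨_, mem_image_of_mem _ (mem_filter.2 ⟨mem_univ x, fun h => hx (h (self_mem_cn G x))⟩)⟩
  rw [← coe_min' hne, WithTop.untopD_coe]
  obtain ⟨v, hv, hmin⟩ := mem_image.1 (min'_mem _ hne)
  exact ⟨v, (mem_filter.1 hv).2, hmin.symm⟩

lemma add_auxVal_le_auxVal_succ_false (G : SimpleGraph V) (m : ℕ) {D : Finset V} {v : V}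
    (hv : ¬ cn G v ⊆ D) : 1 + auxVal G m true (D ∪ cn G v) ≤ auxVal G (m + 1) false D := by
  rw [auxVal, if_neg (ne_univ_of_not_cn_subset hv)]
  dsimp only
  rw [if_neg Bool.false_ne_true, filter_congr_decidable]
  exact le_sup (f := fun v => 1 + auxVal G m true (D ∪ cn G v))
    (mem_filter.2 ⟨mem_univ v, hv⟩)

/-- Every move dominates a new vertex, so `Fintype.card V ≤ m + #D` means the fuel `m` never runs
out before the game ends. -/
theorem two_mul_card_le_auxVal (G : SimpleGraph V) [DecidableRel G.Adj]
    (hS : ∀ D : Finset V, D ≠ univ → ∃ v ∉ D, #(cn G v \ D) ≤ 2) (m : ℕ) :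
    ∀ D : Finset V, Fintype.card V ≤ m + #D →
      (D ≠ univ → 2 * Fintype.card V + 1 ≤
          (G.maxDegree + 3) * auxVal G m true D + 2 * #D + G.maxDegree) ∧
      2 * Fintype.card V ≤ (G.maxDegree + 3) * auxVal G m false D + 2 * #D := by
  induction m with
  | zero =>
    intro D hfuel
    have hD : #D ≤ Fintype.card V := card_le_univ D
    refine ⟨fun hne => ?_, by simp only [auxVal]; omega⟩
    have := card_lt_card (ssubset_univ_iff.2 hne)
    rw [card_univ] at this
    omega
  | succ m ih =>
    intro D hfuel
    by_cases hD : D = univ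
    · subst hD
      simp
    refine ⟨fun _ => ?dominator, ?staller⟩
    case dominator =>
      obtain ⟨v, hv, hval⟩ := exists_auxVal_succ_true_eq G m hD
      have hlt := card_lt_card_union_cn hv
      have hle : #(D ∪ cn G v) ≤ #D + (G.maxDegree + 1) :=
        (card_union_le _ _).trans (by have := card_cn_le G v; omega)
      have := (ih (D ∪ cn G v) (by omega)).2
      rw [hval, mul_add]
      linarith
    case staller =>
      obtain ⟨v, hvD, hv2⟩ := hS D hD
      have hv : ¬ cn G v ⊆ D := fun h => hvD (h (self_mem_cn G v))
      have hlt := card_lt_card_union_cn hv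
      have hcard := card_union_cn G D v
      have hmul := Nat.mul_le_mul_left (G.maxDegree + 3) (add_auxVal_le_auxVal_succ_false G m hv)
      rw [mul_add] at hmul
      by_cases hD' : D ∪ cn G v = univ
      · have hsd : #(cn G v \ D) ≤ G.maxDegree + 1 :=
          (card_le_card sdiff_subset).trans (card_cn_le G v)
        rw [hD', card_univ] at hcard
        nlinarith
      · have := (ih (D ∪ cn G v) (by omega)).1 hD'
        linarith

theorem two_mul_card_le_gammaG_add_one_mul (G : SimpleGraph V) [DecidableRel G.Adj]
    (hS : ∀ D : Finset V, D ≠ univ → ∃ v ∉ D, #(cn G v \ D) ≤ 2) :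
    2 * Fintype.card V ≤ (gammaG G + 1) * (G.maxDegree + 3) := by
  by_cases hV : (∅ : Finset V) = univ
  · simp [← card_univ, ← hV]
  have := (two_mul_card_le_auxVal G hS (Fintype.card V) ∅ (by simp)).1 hV
  rw [card_empty] at this
  rw [gammaG, gVal]
  linarith

end DomGame

/-- for a tree `T` on `n` vertices, γ_g(T) ≥ ⌈2n/(Δ(T)+3)⌉ − 1. -/
theorem stmt4 {V : Type*} [Fintype V] [DecidableEq V] (T : SimpleGraph V)
    [DecidableRel T.Adj] (hT : T.IsTree) :
    (⌈(2 * (Fintype.card V : ℚ)) / ((T.maxDegree : ℚ) + 3)⌉ : ℤ) - 1 ≤ (DomGame.gammaG T : ℤ) := by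
  have key := DomGame.two_mul_card_le_gammaG_add_one_mul T
    fun _ hD => DomGame.exists_card_cn_sdiff_le_two_of_isTree hT hD
  rw [sub_le_iff_le_add, Int.ceil_le, div_le_iff₀ (by positivity)]
  exact_mod_cast key
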